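/- arXiv:1211.0611 — 8 statements merged into one kernel-verified Lean document; each statement's English description precedes it below -/
import Mathlib

section
/- Let R be an equivalence relation on a finite set U, F a field, and B(R) the matrix representation of R over F. A subset X of U is minimal (with respect to set inclusion) among subsets whose indexed columns of B(R) are linearly dependent over F if and only if X = {x, y} for some x ≠ y with x R y. -/
/-!
The column of `B(R)` at `x` is the standard basis vector at the class of `x`, so a family of
columns is linearly independent exactly when its indices lie in pairwise distinct classes.
Hence a set of columns is dependent iff it contains two distinct related points, and the
minimal such sets are these pairs.
-/

/- The matrix representation `B(R)` of an equivalence relation (setoid) `s` over a field `F`. -/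
open Classical in
noncomputable def repMx (F : Type*) [Field F] {α : Type*} (s : Setoid α) :
    Matrix (Quotient s) α F :=
  Matrix.of fun q x => if Quotient.mk s x = q then (1 : F) else 0

/-- The columns of a matrix `A` indexed by a set `X` are linearly independent over `F`. -/
def ColIndep (F : Type*) [Field F] {m α : Type*} (A : Matrix m α F) (X : Set α) : Prop :=
  LinearIndependent F (fun x : X => fun i => A i (x : α))

namespace Set

variable {α β : Type*} {f : α → β} {s : Set α}

theorem not_injOn_iff_exists_pair_subset :
    ¬ InjOn f s ↔ ∃ x y, x ≠ y ∧ f x = f y ∧ {x, y} ⊆ s := by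
  simp only [InjOn, insert_subset_iff, singleton_subset_iff]
  grind

theorem Nontrivial.eq_pair_of_subset {x y : α} (hs : s.Nontrivial) (h : s ⊆ {x, y}) :
    s = {x, y} := by
  rcases hs.nonempty.subset_pair_iff_eq.1 h with rfl | rfl | rfl
  · exact absurd hs not_nontrivial_singleton
  · exact absurd hs not_nontrivial_singleton
  · rfl

theorem minimal_not_injOn_iff :
    Minimal (fun t => ¬ InjOn f t) s ↔ ∃ x y, x ≠ y ∧ f x = f y ∧ s = {x, y} := by
  constructor
  · intro hmin
    obtain ⟨x, y, hne, hf, hsub⟩ := not_injOn_iff_exists_pair_subset.1 hmin.prop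
    have hpair : ¬ InjOn f {x, y} := not_injOn_iff_exists_pair_subset.2 ⟨x, y, hne, hf, rfl.subset⟩
    exact ⟨x, y, hne, hf, (hmin.eq_of_subset hpair hsub).symm⟩
  · rintro ⟨x, y, hne, hf, rfl⟩
    refine ⟨not_injOn_iff_exists_pair_subset.2 ⟨x, y, hne, hf, rfl.subset⟩, fun t ht hsub => ?_⟩
    have htriv : t.Nontrivial := not_subsingleton_iff.1 fun hsing => ht (hsing.injOn f)
    exact (htriv.eq_pair_of_subset hsub).superset

end Set

open Classical in
theorem repMx_col_eq_single (F : Type*) [Field F] {α : Type*} (s : Setoid α) (x : α) :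
    (fun q => repMx F s q x) = Pi.single (Quotient.mk s x) (1 : F) := by
  funext q
  simp only [repMx, Matrix.of_apply, Pi.single_apply, eq_comm]

theorem colIndep_repMx_iff_injOn (F : Type*) [Field F] {α : Type*} (s : Setoid α) (X : Set α) :
    ColIndep F (repMx F s) X ↔ Set.InjOn (Quotient.mk s) X := by
  classical
  have hcols : (fun x : X => fun q => repMx F s q x) =
      (fun q => Pi.single q (1 : F)) ∘ X.domRestrict (Quotient.mk s) :=
    funext fun x => repMx_col_eq_single F s x
  rw [ColIndep, hcols, Set.injOn_iff_injective]
  exact ⟨fun h => h.injective.of_comp, (Pi.linearIndependent_single_one _ F).comp _⟩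

theorem minimal_dep_repMx_iff_general {α : Type*} (F : Type*) [Field F]
    (s : Setoid α) (X : Set α) :
    (¬ ColIndep F (repMx F s) X ∧
        ∀ Y : Set α, ¬ ColIndep F (repMx F s) Y → Y ⊆ X → Y = X) ↔
      ∃ x y : α, x ≠ y ∧ s.r x y ∧ X = {x, y} := by
  simp only [colIndep_repMx_iff_injOn]
  calc _ ↔ Minimal (fun Y => ¬ Set.InjOn (Quotient.mk s) Y) X :=
        ⟨fun h => ⟨h.1, fun Y hY hYX => (h.2 Y hY hYX).ge⟩,
          fun h => ⟨h.prop, fun Y hY hYX => h.eq_of_subset hY hYX⟩⟩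
    _ ↔ _ := by simpa only [Quotient.eq] using Set.minimal_not_injOn_iff (f := Quotient.mk s)

/-- `X ⊆ U` is minimal among subsets whose indexed columns of `B(R)` are
linearly dependent over `F` iff `X = {x, y}` for some `x ≠ y` with `x R y`. -/
theorem minimal_dep_repMx_iff {α : Type*} [Fintype α] (F : Type*) [Field F]
    (s : Setoid α) (X : Set α) :
    (¬ ColIndep F (repMx F s) X ∧
        ∀ Y : Set α, ¬ ColIndep F (repMx F s) Y → Y ⊆ X → Y = X) ↔
      ∃ x y : α, x ≠ y ∧ s.r x y ∧ X = {x, y} :=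
  minimal_dep_repMx_iff_general F s X
end

section
/- Let F be a field and A an m × n matrix over F. A subset X of the set of column indices is minimal (with respect to set inclusion) among subsets whose indexed columns of A are linearly dependent over F if and only if X is minimal among the nonempty supports of vectors in the null space of A, i.e., minimal in the family {support(v) : v ∈ F^n, v ≠ 0, A·v = 0}. -/
/-- The family of nonempty supports of vectors in the null space of `A`. -/
def nullSupports (F : Type*) [Field F] {m n : Type*} [Fintype n] (A : Matrix m n F) :
    Set (Set n) :=
  {S | ∃ v : n → F, v ≠ 0 ∧ A.mulVec v = 0 ∧ S = {i | v i ≠ 0}}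

lemma sum_key_aux {F : Type*} [Field F] {m n : Type*} [Fintype n] (A : Matrix m n F)
    (X : Set n) [Fintype X] (w : n → F) (hw : {j | w j ≠ 0} ⊆ X) (i : m) :
    ∑ x : X, w x * A i x = ∑ j, w j * A i j := by
  classical
  rw [Finset.sum_set_coe (f := fun j => w j * A i j)]
  apply Finset.sum_subset (Finset.subset_univ _)
  intro j _ hj
  have : w j = 0 := by
    by_contra h; exact hj (Set.mem_toFinset.mpr (hw h))
  simp [this]

lemma dep_iff_aux {F : Type*} [Field F] {m n : Type*} [Fintype n] (A : Matrix m n F)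
    (X : Set n) :
    ¬ ColIndep F A X ↔ ∃ v : n → F, v ≠ 0 ∧ A.mulVec v = 0 ∧ {i | v i ≠ 0} ⊆ X := by
  classical
  unfold ColIndep
  rw [Fintype.not_linearIndependent_iff]
  constructor
  · rintro ⟨g, hsum, x₀, hx₀⟩
    set v : n → F := fun j => if h : j ∈ X then g ⟨j, h⟩ else 0 with hv
    have hvsupp : {i | v i ≠ 0} ⊆ X := by
      intro j hj
      by_contra h
      simp [hv, h] at hj
    have hvg : ∀ x : X, v x = g x := fun x => by simp [hv, x.2]
    refine ⟨v, ?_, ?_, hvsupp⟩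
    · intro h
      apply hx₀
      have := congrFun h x₀
      simpa [hvg x₀] using this
    · funext i
      have := congrFun hsum i
      simp only [Finset.sum_apply, Pi.smul_apply, smul_eq_mul, Pi.zero_apply] at this
      simp only [Matrix.mulVec, dotProduct, Pi.zero_apply]
      calc ∑ j, A i j * v j = ∑ j, v j * A i j := by
            exact Finset.sum_congr rfl fun j _ => mul_comm _ _
        _ = ∑ x : X, v x * A i x := (sum_key_aux A X v hvsupp i).symm
        _ = ∑ x : X, g x * A i x := Finset.sum_congr rfl fun x _ => by rw [hvg x]
        _ = 0 := this
  · rintro ⟨v, hv, hnull, hsupp⟩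
    refine ⟨fun x => v x, ?_, ?_⟩
    · funext i
      have := congrFun hnull i
      simp only [Matrix.mulVec, dotProduct, Pi.zero_apply] at this
      simp only [Finset.sum_apply, Pi.smul_apply, smul_eq_mul, Pi.zero_apply]
      calc ∑ x : X, v x * A i x = ∑ j, v j * A i j := sum_key_aux A X v hsupp i
        _ = ∑ j, A i j * v j := Finset.sum_congr rfl fun j _ => mul_comm _ _
        _ = 0 := this
    · obtain ⟨j, hj⟩ := Function.ne_iff.mp hv
      exact ⟨⟨j, hsupp hj⟩, hj⟩

/-- `X` is minimal among subsets whose indexed columns of `A` are linearly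
dependent over `F` iff `X` is minimal among the nonempty supports of vectors in the
null space of `A`. -/
theorem minimal_dep_iff_minimal_nullSupport {F : Type*} [Field F] {m n : Type*}
    [Fintype n] (A : Matrix m n F) (X : Set n) :
    (¬ ColIndep F A X ∧ ∀ Y : Set n, ¬ ColIndep F A Y → Y ⊆ X → Y = X) ↔
      (X ∈ nullSupports F A ∧ ∀ Y ∈ nullSupports F A, Y ⊆ X → Y = X) := by
  have hns : ∀ S ∈ nullSupports F A, ¬ ColIndep F A S := by
    rintro S ⟨v, hv, hnull, rfl⟩
    exact (dep_iff_aux A _).mpr ⟨v, hv, hnull, subset_rfl⟩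
  constructor
  · rintro ⟨hdep, hmin⟩
    obtain ⟨v, hv, hnull, hsupp⟩ := (dep_iff_aux A X).mp hdep
    have hS : {i | v i ≠ 0} ∈ nullSupports F A := ⟨v, hv, hnull, rfl⟩
    have hSX : {i | v i ≠ 0} = X := hmin _ (hns _ hS) hsupp
    exact ⟨hSX ▸ hS, fun Y hY hYX => hmin Y (hns Y hY) hYX⟩
  · rintro ⟨hX, hmin⟩
    refine ⟨hns X hX, fun Y hYdep hYX => ?_⟩
    obtain ⟨v, hv, hnull, hsupp⟩ := (dep_iff_aux A Y).mp hYdep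
    have hS : {i | v i ≠ 0} ∈ nullSupports F A := ⟨v, hv, hnull, rfl⟩
    have := hmin _ hS (hsupp.trans hYX)
    exact subset_antisymm hYX (this ▸ hsupp)
end

section
/- Let R be an equivalence relation on a finite set U, F a field, and B(R) the matrix representation of R over F. The minimal elements (with respect to set inclusion) of the family of nonempty supports of vectors in the null space of B(R), i.e., of {support(v) : v ≠ 0, B(R)·v = 0}, are exactly the two-element sets {x, y} with x ≠ y and x R y. -/
open Classical in
lemma repMx_mulVec_apply {α : Type*} [Fintype α] (F : Type*) [Field F]
    (s : Setoid α) (v : α → F) (q : Quotient s) :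
    (repMx F s).mulVec v q = ∑ x, if Quotient.mk s x = q then v x else 0 := by
  classical
  simp [Matrix.mulVec, dotProduct, repMx, ite_mul, one_mul, zero_mul]

open Classical in
lemma exists_other {α : Type*} [Fintype α] (F : Type*) [Field F]
    (s : Setoid α) {v : α → F} (hv : (repMx F s).mulVec v = 0)
    {x : α} (hx : v x ≠ 0) :
    ∃ y, y ≠ x ∧ Quotient.mk s y = Quotient.mk s x ∧ v y ≠ 0 := by
  classical
  by_contra h
  push_neg at h
  have hsum : (repMx F s).mulVec v (Quotient.mk s x) = 0 := by rw [hv]; rfl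
  rw [repMx_mulVec_apply] at hsum
  rw [Fintype.sum_eq_single x (fun z hz => ?_)] at hsum
  · simp at hsum; exact hx hsum
  · rcases eq_or_ne (Quotient.mk s z) (Quotient.mk s x) with hq | hq
    · simpa [hq] using h z hz hq
    · simp [hq]

/-- the minimal elements of the family of nonempty supports of vectors in
the null space of `B(R)` are exactly the two-element sets `{x, y}` with `x ≠ y` and
`x R y`. -/
theorem minimal_nullSupport_repMx_iff {α : Type*} [Fintype α] (F : Type*) [Field F]
    (s : Setoid α) (X : Set α) :
    (X ∈ nullSupports F (repMx F s) ∧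
        ∀ Y ∈ nullSupports F (repMx F s), Y ⊆ X → Y = X) ↔
      ∃ x y : α, x ≠ y ∧ s.r x y ∧ X = {x, y} := by
  classical
  -- handy: the pair vector
  have pairvec : ∀ x y : α, x ≠ y → Quotient.mk s x = Quotient.mk s y →
      ({x, y} : Set α) ∈ nullSupports F (repMx F s) := by
    intro x y hxy hq
    refine ⟨fun z => if z = x then 1 else if z = y then -1 else 0, ?_, ?_, ?_⟩
    · intro h
      have := congrFun h x
      simp at this
    · funext q
      rw [repMx_mulVec_apply]
      have : ∀ z : α, (if Quotient.mk s z = q then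
          (if z = x then (1:F) else if z = y then -1 else 0) else 0) =
          (if z = x then (if Quotient.mk s x = q then (1:F) else 0) else 0) +
          (if z = y then (if Quotient.mk s y = q then (-1:F) else 0) else 0) := by
        intro z
        by_cases hzx : z = x <;> by_cases hzy : z = y <;>
          simp_all <;> split <;> simp
      rw [Finset.sum_congr rfl (fun z _ => this z), Finset.sum_add_distrib]
      simp only [hq, Finset.sum_ite_eq', Finset.mem_univ, if_true, Pi.zero_apply]
      split <;> ring
    · ext z
      simp only [Set.mem_insert_iff, Set.mem_singleton_iff, Set.mem_setOf_eq]
      by_cases hzx : z = x <;> by_cases hzy : z = y <;> simp_all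
  constructor
  · rintro ⟨⟨v, hv0, hvnull, hX⟩, hmin⟩
    -- find x with v x ≠ 0
    have : ∃ x, v x ≠ 0 := by
      by_contra h; push_neg at h; exact hv0 (funext fun x => h x)
    obtain ⟨x, hx⟩ := this
    obtain ⟨y, hyx, hq, hy⟩ := exists_other F s hvnull hx
    have hmem := pairvec x y (Ne.symm hyx) hq.symm
    have hsub : ({x, y} : Set α) ⊆ X := by
      intro z hz
      rcases hz with hz | hz <;> subst hz <;> [exact hX ▸ hx; exact hX ▸ hy]
    refine ⟨x, y, Ne.symm hyx, Quotient.eq''.mp hq.symm, (hmin _ hmem hsub).symm⟩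
  · rintro ⟨x, y, hxy, hr, rfl⟩
    have hq : Quotient.mk s x = Quotient.mk s y := Quotient.sound hr
    refine ⟨pairvec x y hxy hq, ?_⟩
    rintro Y ⟨u, hu0, hunull, rfl⟩ hsub
    -- show u x ≠ 0 and u y ≠ 0
    have key : ∀ a b : α, a ≠ b → Quotient.mk s a = Quotient.mk s b →
        ({i | u i ≠ 0} : Set α) ⊆ {a, b} → u a = 0 → False := by
      intro a b hab hqab hs hua
      have : ∃ z, u z ≠ 0 := by
        by_contra h; push_neg at h; exact hu0 (funext fun z => h z)
      obtain ⟨z, hz⟩ := this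
      have hzb : z = b := by
        rcases hs hz with h | h
        · subst h; exact absurd hua hz
        · exact h
      subst hzb
      obtain ⟨w, hwz, hwq, hw⟩ := exists_other F s hunull hz
      rcases hs hw with h | h
      · subst h; exact hw hua
      · exact hwz h
    have hux : u x ≠ 0 := fun h => key x y hxy hq hsub h
    have huy : u y ≠ 0 := fun h =>
      key y x (Ne.symm hxy) hq.symm (hsub.trans (by simp [Set.pair_comm])) h
    apply Set.Subset.antisymm hsub
    intro z hz
    simp only [Set.mem_insert_iff, Set.mem_singleton_iff] at hz
    rcases hz with rfl | rfl
    exacts [hux, huy]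
end

section
/- Let R be an equivalence relation on a finite set U. A subset X ⊆ U intersects each equivalence class of R in exactly one element if and only if X is minimal (with respect to set inclusion) in the family {Y ⊆ U : R*(Y) = U} of subsets whose upper approximation equals U. -/
/-- The upper approximation of a set `X` with respect to an equivalence relation `s`:
the union of the equivalence classes meeting `X`. -/
def upperApprox {α : Type*} (s : Setoid α) (X : Set α) : Set α :=
  {z | ∃ x ∈ X, s.r x z}

/-! A transversal is a cover of the classes (`upperApprox s X = univ`) that meets each class at
most once. Removing one of two related points of a cover leaves a cover, so a minimal cover meets
each class at most once; conversely, a subcover of a transversal must keep each of its points,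
the only one of `X` in its class. -/

namespace upperApprox

variable {α : Type*} (s : Setoid α) {X : Set α}

theorem eq_univ_iff : upperApprox s X = Set.univ ↔ ∀ y, ∃ x ∈ X, s.r x y :=
  Set.eq_univ_iff_forall

theorem diff_singleton_eq {x x' : α} (hx' : x' ∈ X) (hne : x' ≠ x) (hrel : s.r x' x) :
    upperApprox s (X \ {x}) = upperApprox s X := by
  refine (Set.Subset.antisymm (fun z ⟨w, hw, hwz⟩ => ⟨w, hw.1, hwz⟩) ?_)
  rintro z ⟨w, hwX, hwz⟩
  by_cases hw : w = x
  · subst hw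
    exact ⟨x', ⟨hx', hne⟩, s.trans hrel hwz⟩
  · exact ⟨w, ⟨hwX, hw⟩, hwz⟩

theorem forall_existsUnique_rel_iff :
    (∀ y, ∃! x, x ∈ X ∧ s.r x y) ↔
      upperApprox s X = Set.univ ∧ ∀ a ∈ X, ∀ b ∈ X, s.r a b → a = b := by
  rw [eq_univ_iff]
  constructor
  · intro h
    refine ⟨fun y => (h y).exists, fun a ha b hb hab => ?_⟩
    exact (h b).unique ⟨ha, hab⟩ ⟨hb, s.refl b⟩
  · rintro ⟨hcover, hsep⟩ y
    obtain ⟨x, hx, hxy⟩ := hcover y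
    exact ⟨x, ⟨hx, hxy⟩, fun x' ⟨hx', hx'y⟩ => hsep x' hx' x hx (s.trans hx'y (s.symm hxy))⟩

theorem minimal_iff (hX : upperApprox s X = Set.univ) :
    (∀ Y : Set α, upperApprox s Y = Set.univ → Y ⊆ X → Y = X) ↔
      ∀ a ∈ X, ∀ b ∈ X, s.r a b → a = b := by
  constructor
  · intro hmin a ha b hb hab
    by_contra hne
    have hcover : upperApprox s (X \ {b}) = Set.univ := by
      rw [diff_singleton_eq s ha hne hab, hX]
    have hb' : b ∈ X \ {b} := (hmin _ hcover Set.sdiff_subset).symm ▸ hb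
    exact hb'.2 rfl
  · intro hsep Y hY hYX
    refine Set.Subset.antisymm hYX fun x hx => ?_
    obtain ⟨y, hy, hyx⟩ := (eq_univ_iff s).1 hY x
    exact hsep y (hYX hy) x hx hyx ▸ hy

end upperApprox

theorem transversal_iff_minimal_upperApprox_univ_general {α : Type*}
    (s : Setoid α) (X : Set α) :
    (∀ y : α, ∃! x, x ∈ X ∧ s.r x y) ↔
      (upperApprox s X = Set.univ ∧
        ∀ Y : Set α, upperApprox s Y = Set.univ → Y ⊆ X → Y = X) := by
  rw [upperApprox.forall_existsUnique_rel_iff]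
  exact and_congr_right fun hX => (upperApprox.minimal_iff s hX).symm

/-- `X ⊆ U` intersects each equivalence class of `R` in exactly one element
iff `X` is minimal in the family of subsets whose upper approximation equals `U`. -/
theorem transversal_iff_minimal_upperApprox_univ {α : Type*} [Fintype α]
    (s : Setoid α) (X : Set α) :
    (∀ y : α, ∃! x, x ∈ X ∧ s.r x y) ↔
      (upperApprox s X = Set.univ ∧
        ∀ Y : Set α, upperApprox s Y = Set.univ → Y ⊆ X → Y = X) :=
  transversal_iff_minimal_upperApprox_univ_general s X
end

section
/- Let R be an equivalence relation on a finite set U and B(R) its matrix representation over the two-element field GF(2) (= ZMod 2). The minimal elements (with respect to set inclusion) of the family {support(v) : v is a vector over GF(2) indexed by U with B(R)·v = 1 (the all-ones vector)} are exactly the subsets of U that intersect each equivalence class of R in exactly one element. -/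
/-- The family of supports of vectors `v` over `GF(2)` with `B(R) · v = 1`
(the all-ones vector). -/
def oneSupports {α : Type*} [Fintype α] (s : Setoid α) : Set (Set α) :=
  {S | ∃ v : α → ZMod 2, (repMx (ZMod 2) s).mulVec v = (fun _ => 1) ∧ S = {x | v x ≠ 0}}

open Classical

lemma repMx_mulVec {α : Type*} [Fintype α] (s : Setoid α) (v : α → ZMod 2) (q : Quotient s) :
    (repMx (ZMod 2) s).mulVec v q =
      ∑ x ∈ Finset.univ.filter (fun x => Quotient.mk s x = q), v x := by
  classical
  simp [Matrix.mulVec, dotProduct, repMx, Finset.sum_filter, ite_mul]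

lemma exists_of_sol {α : Type*} [Fintype α] {s : Setoid α} {v : α → ZMod 2}
    (hv : (repMx (ZMod 2) s).mulVec v = fun _ => 1) (y : α) :
    ∃ x, v x ≠ 0 ∧ s.r x y := by
  have h := congrFun hv (Quotient.mk s y)
  rw [repMx_mulVec] at h
  have hne : ∑ x ∈ Finset.univ.filter (fun x => Quotient.mk s x = Quotient.mk s y), v x ≠ 0 := by
    rw [h]; exact one_ne_zero
  obtain ⟨x, hx, hvx⟩ := Finset.exists_ne_zero_of_sum_ne_zero hne
  simp only [Finset.mem_filter] at hx
  exact ⟨x, hvx, Quotient.exact hx.2⟩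

/-- the minimal elements of the family of supports of solutions of
`B(R) · v = 1` over `GF(2)` are exactly the subsets of `U` intersecting each equivalence
class of `R` in exactly one element. -/
theorem minimal_oneSupport_iff_transversal {α : Type*} [Fintype α]
    (s : Setoid α) (X : Set α) :
    (X ∈ oneSupports s ∧ ∀ Y ∈ oneSupports s, Y ⊆ X → Y = X) ↔
      ∀ y : α, ∃! x, x ∈ X ∧ s.r x y := by
  classical
  constructor
  · rintro ⟨⟨v, hv, hX⟩, hmin⟩
    have hex : ∀ q : Quotient s, ∃ x, Quotient.mk s x = q ∧ v x ≠ 0 := by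
      intro q
      induction q using Quotient.ind with
      | _ y =>
        obtain ⟨x, hx, hr⟩ := exists_of_sol hv y
        exact ⟨x, Quotient.sound hr, hx⟩
    choose f hf1 hf2 using hex
    set Y : Set α := {x | x = f (Quotient.mk s x)} with hY
    have hw : Y ∈ oneSupports s := by
      refine ⟨fun x => if x = f (Quotient.mk s x) then 1 else 0, ?_, ?_⟩
      · funext q
        rw [repMx_mulVec, Finset.sum_eq_single (f q)]
        · simp [hf1 q]
        · intro b hb hne
          simp only [Finset.mem_filter] at hb
          rw [if_neg]
          rw [hb.2]
          exact hne
        · intro hb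
          simp [hf1 q] at hb
      · ext x
        show (x = f (Quotient.mk s x)) ↔ _
        simp only [Set.mem_setOf_eq]
        by_cases h : x = f (Quotient.mk s x)
        · rw [if_pos h]; exact iff_of_true h one_ne_zero
        · rw [if_neg h]; exact iff_of_false h (fun h0 => h0 rfl)
    have hYX : Y ⊆ X := by
      intro x hx
      rw [hX, Set.mem_setOf_eq]
      rw [Set.mem_setOf_eq] at hx
      rw [hx]
      exact hf2 _
    have hXY := hmin Y hw hYX
    intro y
    refine ⟨f (Quotient.mk s y), ⟨?_, ?_⟩, ?_⟩
    · rw [← hXY]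
      show f (Quotient.mk s y) = f (Quotient.mk s (f (Quotient.mk s y)))
      rw [hf1]
    · exact Quotient.exact (hf1 _)
    · rintro x ⟨hxX, hxy⟩
      rw [← hXY] at hxX
      have hq : Quotient.mk s x = Quotient.mk s y := Quotient.sound hxy
      rw [Set.mem_setOf_eq] at hxX
      rw [hxX, hq]
  · intro h
    constructor
    · refine ⟨fun x => if x ∈ X then 1 else 0, ?_, ?_⟩
      · funext q
        rw [repMx_mulVec]
        induction q using Quotient.ind with
        | _ y =>
          obtain ⟨x₀, ⟨hx₀X, hx₀r⟩, hu⟩ := h y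
          rw [Finset.sum_eq_single x₀]
          · simp [hx₀X]
          · intro b hb hne
            simp only [Finset.mem_filter] at hb
            rw [if_neg]
            intro hbX
            exact hne (hu b ⟨hbX, Quotient.exact hb.2⟩)
          · intro hb
            simp only [Finset.mem_filter, Finset.mem_univ, true_and] at hb
            exact (hb (Quotient.sound hx₀r)).elim
      · ext x
        by_cases hx : x ∈ X <;> simp [hx]
    · rintro Y ⟨w, hw, hYw⟩ hYX
      apply Set.Subset.antisymm hYX
      intro x hxX
      obtain ⟨x', hx', hr⟩ := exists_of_sol hw x
      have hx'Y : x' ∈ Y := by rw [hYw]; exact hx'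
      have hx'X : x' ∈ X := hYX hx'Y
      obtain ⟨z, _, hu⟩ := h x
      have h1 := hu x' ⟨hx'X, hr⟩
      have h2 := hu x ⟨hxX, Setoid.refl x⟩
      rw [h2, ← h1]
      exact hx'Y
end

section
/- Let R be an equivalence relation on a finite set U and B(R) its matrix representation over the two-element field GF(2) (= ZMod 2). For a subset X ⊆ U, the columns of B(R) indexed by X are linearly independent over GF(2) if and only if X is contained in some set Y that is minimal (with respect to set inclusion) in the family {support(v) : v is a vector over GF(2) indexed by U with B(R)·v = 1 (the all-ones vector)}. -/
section aux
variable {α : Type*} [Fintype α] (s : Setoid α)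

open Classical

-- a column of repMx is a standard basis vector
omit [Fintype α] in
lemma repMx_col (x : α) :
    (fun q => repMx (ZMod 2) s q x) = Pi.single (Quotient.mk s x) (1 : ZMod 2) := by
  funext q
  simp only [repMx, Matrix.of_apply, Pi.single_apply]
  exact if_congr (by exact eq_comm) rfl rfl

-- transversals are in oneSupports
lemma transversal_mem (c : Quotient s → α) (hc : ∀ q, Quotient.mk s (c q) = q) :
    Set.range c ∈ oneSupports s := by
  classical
  refine ⟨fun x => if x ∈ Set.range c then 1 else 0, ?_, ?_⟩
  · funext q
    simp only [Matrix.mulVec, dotProduct, repMx, Matrix.of_apply]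
    rw [Finset.sum_eq_single (c q)]
    · simp [hc q]
    · intro b _ hb
      by_cases h1 : Quotient.mk s b = q
      · by_cases h2 : b ∈ Set.range c
        · obtain ⟨q', rfl⟩ := h2
          rw [hc q'] at h1
          exact absurd (congrArg c h1) hb
        · simp [h2]
      · simp [h1]
    · simp
  · ext x
    by_cases h : x ∈ Set.range c
    · simp only [Set.mem_setOf_eq, if_pos h, ne_eq, one_ne_zero, not_false_iff, true_iff]
      exact iff_true_intro h
    · simp only [Set.mem_setOf_eq, if_neg h, ne_eq, not_true, false_iff]
      exact iff_false_intro h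

-- any member of oneSupports hits every class
lemma mem_hits (Y : Set α) (hY : Y ∈ oneSupports s) (q : Quotient s) :
    ∃ x ∈ Y, Quotient.mk s x = q := by
  obtain ⟨v, hv, rfl⟩ := hY
  have h1 : (repMx (ZMod 2) s).mulVec v q = 1 := congrFun hv q
  by_contra h
  push_neg at h
  have : (repMx (ZMod 2) s).mulVec v q = 0 := by
    simp only [Matrix.mulVec, dotProduct, repMx, Matrix.of_apply]
    apply Finset.sum_eq_zero
    intro x _
    by_cases hx : Quotient.mk s x = q
    · have : v x = 0 := by
        by_contra hvx
        exact (h x hvx) hx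
      simp [this]
    · simp [hx]
  rw [this] at h1
  exact one_ne_zero h1.symm

-- transversals are minimal in oneSupports
lemma transversal_minimal (c : Quotient s → α) (hc : ∀ q, Quotient.mk s (c q) = q)
    (Z : Set α) (hZ : Z ∈ oneSupports s) (hsub : Z ⊆ Set.range c) : Z = Set.range c := by
  apply Set.Subset.antisymm hsub
  rintro _ ⟨q, rfl⟩
  obtain ⟨x, hxZ, hxq⟩ := mem_hits s Z hZ q
  obtain ⟨q', rfl⟩ := hsub hxZ
  rw [hc q'] at hxq
  rwa [hxq] at hxZ

lemma colIndep_iff_injOn (X : Set α) :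
    ColIndep (ZMod 2) (repMx (ZMod 2) s) X ↔ Set.InjOn (Quotient.mk s) X := by
  classical
  have hcol : (fun x : X => fun q => repMx (ZMod 2) s q (x : α))
      = fun x : X => Pi.single (Quotient.mk s (x : α)) (1 : ZMod 2) := by
    funext x; exact repMx_col s x
  unfold ColIndep
  rw [hcol]
  constructor
  · intro h a ha b hb hab
    have : (⟨a, ha⟩ : X) = ⟨b, hb⟩ := h.injective (by simp only [hab])
    exact Subtype.ext_iff.mp this
  · intro h
    have hinj : Function.Injective (fun x : X => Quotient.mk s (x : α)) := by
      intro a b hab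
      exact Subtype.ext (h a.2 b.2 hab)
    have hli := (Pi.basisFun (ZMod 2) (Quotient s)).linearIndependent
    have := hli.comp _ hinj
    convert this using 1
    funext x
    simp [Function.comp, Pi.basisFun_apply]
end aux


/-- over `GF(2)`, the columns of `B(R)` indexed by `X` are linearly
independent iff `X` is contained in some minimal element of the family of supports of
solutions of `B(R) · v = 1`. -/
theorem colIndep_iff_subset_minimal_oneSupport {α : Type*} [Fintype α]
    (s : Setoid α) (X : Set α) :
    ColIndep (ZMod 2) (repMx (ZMod 2) s) X ↔
      ∃ Y : Set α, (Y ∈ oneSupports s ∧ ∀ Z ∈ oneSupports s, Z ⊆ Y → Z = Y) ∧ X ⊆ Y := by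
  classical
  rw [colIndep_iff_injOn]
  constructor
  · intro h
    -- build a transversal containing X
    have hch : ∀ q : Quotient s, ∃ x : α, Quotient.mk s x = q ∧ ((∃ y ∈ X, Quotient.mk s y = q) → x ∈ X) := by
      intro q
      by_cases hq : ∃ y ∈ X, Quotient.mk s y = q
      · obtain ⟨y, hy, hyq⟩ := hq
        exact ⟨y, hyq, fun _ => hy⟩
      · exact ⟨q.out, Quotient.out_eq q, fun hc => absurd hc hq⟩
    choose c hc1 hc2 using hch
    refine ⟨Set.range c, ⟨transversal_mem s c hc1, transversal_minimal s c hc1⟩, ?_⟩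
    intro x hx
    refine ⟨Quotient.mk s x, ?_⟩
    have hx' : c (Quotient.mk s x) ∈ X := hc2 _ ⟨x, hx, rfl⟩
    exact h hx' hx (hc1 _)
  · rintro ⟨Y, ⟨hY, hmin⟩, hXY⟩
    -- pick a transversal inside Y; by minimality it equals Y
    have hch : ∀ q : Quotient s, ∃ x : α, x ∈ Y ∧ Quotient.mk s x = q := fun q => by
      obtain ⟨x, h1, h2⟩ := mem_hits s Y hY q; exact ⟨x, h1, h2⟩
    choose c hc1 hc2 using hch
    have hYeq : Set.range c = Y := by
      apply hmin
      · exact transversal_mem s c hc2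
      · rintro _ ⟨q, rfl⟩; exact hc1 q
    intro a ha b hb hab
    obtain ⟨qa, hqa⟩ : (a : α) ∈ Set.range c := hYeq ▸ hXY ha
    obtain ⟨qb, hqb⟩ : (b : α) ∈ Set.range c := hYeq ▸ hXY hb
    rw [← hqa, ← hqb] at hab ⊢
    rw [hc2, hc2] at hab
    rw [hab]
end

section
/- Let A be a binary dependence matrix over the two-element field GF(2) (= ZMod 2) with finite column index set U: no column of A is zero and every linearly dependent set of columns of A contains two columns forming a linearly dependent pair. Then the minimal elements (with respect to set inclusion) of the family of nonempty supports of vectors in the null space of A, i.e., of {support(v) : v ≠ 0, A·v = 0}, are exactly the two-element sets {x, y} with x ≠ y such that the columns of A at x and y are equal. -/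
private lemma zmod2_ne_zero : ∀ a : ZMod 2, a ≠ 0 → a = 1 := by decide
private lemma zmod2_add_eq_zero : ∀ a b : ZMod 2, a + b = 0 → a = b := by decide

/-- A dependent pair of nonzero columns over GF(2) consists of equal columns. -/
private lemma col_pair_eq {m α : Type*} (A : Matrix m α (ZMod 2))
    (h₀ : ∀ x : α, (fun i => A i x) ≠ 0) {x y : α} (hxy : x ≠ y)
    (h : ¬ ColIndep (ZMod 2) A {x, y}) : (fun i => A i x) = fun i => A i y := by
  classical
  by_contra hne
  apply h
  have hpair : LinearIndependent (ZMod 2) ![(fun i => A i x), (fun i => A i y)] := by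
    rw [LinearIndependent.pair_iff]
    intro s t hst
    have hc : ∀ a : ZMod 2, a = 0 ∨ a = 1 := by decide
    rcases hc s with rfl | rfl <;> rcases hc t with rfl | rfl <;>
        simp only [zero_smul, one_smul, zero_add, add_zero] at hst ⊢
    · exact ⟨trivial, trivial⟩
    · exact absurd hst (h₀ y)
    · exact absurd hst (h₀ x)
    · exact (hne (funext fun i => zmod2_add_eq_zero _ _ (congrFun hst i))).elim
  have hg : Function.Injective
      (fun z : ({x, y} : Set α) => if (z : α) = x then (0 : Fin 2) else 1) := by
    rintro ⟨a, ha⟩ ⟨b, hb⟩ hab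
    apply Subtype.ext
    simp only [Set.mem_insert_iff, Set.mem_singleton_iff] at ha hb
    simp only at hab
    rcases ha with rfl | rfl <;> rcases hb with rfl | rfl
    · rfl
    · rw [if_pos rfl, if_neg (Ne.symm hxy)] at hab
      exact absurd hab (by decide)
    · rw [if_pos rfl, if_neg (Ne.symm hxy)] at hab
      exact absurd hab.symm (by decide)
    · rfl
  have hcomp := hpair.comp _ hg
  have heq : (fun z : ({x, y} : Set α) => fun i => A i (z : α)) =
      ![(fun i => A i x), (fun i => A i y)] ∘
        (fun z : ({x, y} : Set α) => if (z : α) = x then (0 : Fin 2) else 1) := by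
    funext z
    rcases z with ⟨a, ha⟩
    simp only [Set.mem_insert_iff, Set.mem_singleton_iff] at ha
    rcases ha with rfl | rfl
    · simp
    · simp [if_neg (Ne.symm hxy)]
  rw [ColIndep, heq]
  exact hcomp

/-- The columns indexed by the support of a nonzero null vector are dependent. -/
private lemma not_colIndep_of_null {m α : Type*} [Fintype α] (A : Matrix m α (ZMod 2))
    {v : α → ZMod 2} (hv : v ≠ 0) (hAv : A.mulVec v = 0) :
    ¬ ColIndep (ZMod 2) A {i | v i ≠ 0} := by
  classical
  intro hindep
  obtain ⟨j, hj⟩ : ∃ j, v j ≠ 0 := by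
    by_contra hc
    push_neg at hc
    exact hv (funext fun j => hc j)
  have hsum : ∑ z : ({i | v i ≠ 0} : Set α),
      v (z : α) • (fun i => A i (z : α)) = 0 := by
    funext i
    simp only [Finset.sum_apply, Pi.smul_apply, smul_eq_mul, Pi.zero_apply]
    rw [Finset.sum_set_coe (f := fun z => v z * A i z)]
    have h2 : ∑ z ∈ ({i | v i ≠ 0} : Set α).toFinset, v z * A i z
        = ∑ z : α, v z * A i z := by
      apply Finset.sum_subset (Finset.subset_univ _)
      intro z _ hz
      simp only [Set.mem_toFinset, Set.mem_setOf_eq, not_not] at hz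
      rw [hz, zero_mul]
    rw [h2]
    have := congrFun hAv i
    simpa [Matrix.mulVec, dotProduct, mul_comm] using this
  have hall := Fintype.linearIndependent_iff.mp hindep (fun z => v (z : α)) hsum
  exact hj (hall ⟨j, hj⟩)

/-- if `A` is a binary dependence matrix over `GF(2)` (no zero column, and
every linearly dependent set of columns contains a linearly dependent pair), then the
minimal elements of the family of nonempty supports of vectors in the null space of `A`
are exactly the two-element sets `{x, y}` with `x ≠ y` whose columns in `A` are equal. -/
theorem binary_dependence_minimal_nullSupport {m α : Type*} [Fintype α]
    (A : Matrix m α (ZMod 2))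
    (h₀ : ∀ x : α, (fun i => A i x) ≠ 0)
    (hdep : ∀ X : Set α, ¬ ColIndep (ZMod 2) A X →
      ∃ x ∈ X, ∃ y ∈ X, x ≠ y ∧ ¬ ColIndep (ZMod 2) A {x, y}) :
    ∀ X : Set α,
      (X ∈ nullSupports (ZMod 2) A ∧ ∀ Y ∈ nullSupports (ZMod 2) A, Y ⊆ X → Y = X) ↔
        ∃ x y : α, x ≠ y ∧ ((fun i => A i x) = fun i => A i y) ∧ X = {x, y} := by
  classical
  -- indicator vector of a pair with equal columns is a null vector
  have key : ∀ x y : α, x ≠ y → ((fun i => A i x) = fun i => A i y) →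
      ({x, y} : Set α) ∈ nullSupports (ZMod 2) A := by
    intro x y hxy hcol
    refine ⟨fun z => if z = x ∨ z = y then 1 else 0, ?_, ?_, ?_⟩
    · intro hw
      have := congrFun hw x
      simp at this
    · funext i
      have h2 : ∑ z ∈ ({x, y} : Finset α),
          A i z * (if z = x ∨ z = y then (1 : ZMod 2) else 0) = ∑ z : α,
          A i z * (if z = x ∨ z = y then (1 : ZMod 2) else 0) := by
        apply Finset.sum_subset (Finset.subset_univ _)
        intro z _ hz
        simp only [Finset.mem_insert, Finset.mem_singleton] at hz
        rw [if_neg hz, mul_zero]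
      have h3 : A i x = A i y := congrFun hcol i
      simp only [Matrix.mulVec, dotProduct, Pi.zero_apply]
      rw [← h2, Finset.sum_pair hxy]
      simp [hxy, h3, CharTwo.add_self_eq_zero]
    · ext z
      simp only [Set.mem_setOf_eq, Set.mem_insert_iff, Set.mem_singleton_iff]
      by_cases hz : z = x ∨ z = y
      · simp [if_pos hz, hz]
      · simp [if_neg hz, hz]
  intro X
  constructor
  · rintro ⟨⟨v, hv, hAv, hX⟩, hmin⟩
    subst hX
    obtain ⟨x, hx, y, hy, hxy, hp⟩ := hdep _ (not_colIndep_of_null A hv hAv)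
    have hcol := col_pair_eq A h₀ hxy hp
    refine ⟨x, y, hxy, hcol, ?_⟩
    have hsub : ({x, y} : Set α) ⊆ {i | v i ≠ 0} := by
      rintro z (rfl | rfl) <;> assumption
    exact (hmin _ (key x y hxy hcol) hsub).symm
  · rintro ⟨x, y, hxy, hcol, rfl⟩
    refine ⟨key x y hxy hcol, ?_⟩
    rintro Y ⟨u, hu, hAu, rfl⟩ hYsub
    -- the support of a null vector can't be a singleton
    have hsing : ∀ z : α, {i | u i ≠ 0} ≠ ({z} : Set α) := by
      intro z hz
      have huz : u z ≠ 0 := (Set.ext_iff.mp hz z).mpr rfl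
      apply h₀ z
      funext i
      have hAui := congrFun hAu i
      simp only [Matrix.mulVec, dotProduct, Pi.zero_apply] at hAui
      have hs : ∑ w : α, A i w * u w = A i z * u z := by
        apply Finset.sum_eq_single
        · intro w _ hw
          have huw : u w = 0 := by
            by_contra hc
            exact hw ((Set.ext_iff.mp hz w).mp hc)
          rw [huw, mul_zero]
        · intro h; exact absurd (Finset.mem_univ z) h
      rw [hs, zmod2_ne_zero _ huz, mul_one] at hAui
      exact hAui
    have hxmem : x ∈ {i | u i ≠ 0} := by
      by_contra hx
      apply hsing y
      apply Set.eq_singleton_iff_nonempty_unique_mem.mpr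
      constructor
      · obtain ⟨j, hj⟩ : ∃ j, u j ≠ 0 := by
          by_contra hc
          push_neg at hc
          exact hu (funext fun j => hc j)
        exact ⟨j, hj⟩
      · intro w hw
        rcases hYsub hw with rfl | rfl
        · exact absurd hw hx
        · rfl
    have hymem : y ∈ {i | u i ≠ 0} := by
      by_contra hy
      apply hsing x
      apply Set.eq_singleton_iff_nonempty_unique_mem.mpr
      refine ⟨⟨x, hxmem⟩, ?_⟩
      intro w hw
      rcases hYsub hw with rfl | rfl
      · rfl
      · exact absurd hw hy
    apply Set.Subset.antisymm hYsub
    rintro z (rfl | rfl) <;> assumption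
end

section
/- Let U be a finite set. Define, for each equivalence relation R on U, f(R) to be the set of minimal elements (with respect to set inclusion) of the family of nonempty supports of vectors in the null space over the two-element field GF(2) (= ZMod 2) of the matrix representation B(R) of R. Then f is injective (if f(R₁) = f(R₂) then R₁ = R₂) and f preserves intersections: for all equivalence relations R₁, R₂ on U, f(R₁ ∩ R₂) = f(R₁) ∩ f(R₂), where R₁ ∩ R₂ is the equivalence relation with x (R₁ ∩ R₂) y iff x R₁ y and x R₂ y. -/
/-- `f(R)`: the set of minimal elements of the family of nonempty supports of vectors in
the null space over `GF(2)` of the matrix representation `B(R)` of `R`. -/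
noncomputable def minNullSupports {α : Type*} [Fintype α] (s : Setoid α) : Set (Set α) :=
  {X | X ∈ nullSupports (ZMod 2) (repMx (ZMod 2) s) ∧
    ∀ Y ∈ nullSupports (ZMod 2) (repMx (ZMod 2) s), Y ⊆ X → Y = X}

/-!
The minimal null supports of `B(R)` are exactly the pairs `{x, y}` of distinct `R`-related
points, over any field. Indeed `B(R) v = 0` says that `v` sums to zero on every class, so a
point of a null support has a distinct partner in its class and in the support; thus every
null support contains such a pair, while `e_x - e_y` is a null vector with support `{x, y}`.
Hence `R` can be read off `f(R)`, and a pair lies in `f(R₁ ∩ R₂)` iff it lies in both `f(R₁)`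
and `f(R₂)`.
-/

section RepMx

variable {F : Type*} [Field F] {α : Type*} [Fintype α] (s : Setoid α)

open Classical in
theorem mulVec_repMx_apply (v : α → F) (q : Quotient s) :
    (repMx F s).mulVec v q = ∑ z with Quotient.mk s z = q, v z := by
  simp [repMx, Matrix.mulVec, dotProduct, Finset.sum_filter]

theorem exists_rel_ne_of_mulVec_repMx_eq_zero {v : α → F} (hv : (repMx F s).mulVec v = 0)
    {x : α} (hx : v x ≠ 0) : ∃ y, y ≠ x ∧ v y ≠ 0 ∧ s.r x y := by
  classical
  by_contra! h
  have hrow := mulVec_repMx_apply s v (Quotient.mk s x)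
  rw [hv, Finset.sum_eq_single_of_mem x (by simp)] at hrow
  · exact hx hrow.symm
  · intro z hz hzx
    by_contra hvz
    exact h z hzx hvz (s.symm (Quotient.exact (Finset.mem_filter.1 hz).2))

theorem exists_pair_subset_of_mem_nullSupports {S : Set α}
    (hS : S ∈ nullSupports F (repMx F s)) : ∃ x y, x ≠ y ∧ s.r x y ∧ {x, y} ⊆ S := by
  obtain ⟨v, hv0, hv, rfl⟩ := hS
  obtain ⟨x, hx⟩ := Function.ne_iff.1 hv0
  obtain ⟨y, hyx, hy, hxy⟩ := exists_rel_ne_of_mulVec_repMx_eq_zero s hv hx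
  exact ⟨x, y, hyx.symm, hxy, Set.insert_subset hx (Set.singleton_subset_iff.2 hy)⟩

theorem pair_mem_nullSupports {x y : α} (hxy : x ≠ y) (hr : s.r x y) :
    {x, y} ∈ nullSupports F (repMx F s) := by
  classical
  refine ⟨Pi.single x 1 - Pi.single y 1, ?_, ?_, ?_⟩
  · intro h
    simpa [Pi.single_apply, hxy] using congrFun h x
  · ext q
    simp [Matrix.mulVec_sub, repMx, Quotient.sound hr]
  · ext z
    by_cases hzx : z = x <;> by_cases hzy : z = y <;> simp [hzx, hzy, hxy, Ne.symm hxy]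

end RepMx

theorem mem_minNullSupports_iff {α : Type*} [Fintype α] {s : Setoid α} {S : Set α} :
    S ∈ minNullSupports s ↔ ∃ x y, x ≠ y ∧ s.r x y ∧ S = {x, y} := by
  constructor
  · rintro ⟨hS, hmin⟩
    obtain ⟨x, y, hxy, hr, hsub⟩ := exists_pair_subset_of_mem_nullSupports s hS
    exact ⟨x, y, hxy, hr, (hmin _ (pair_mem_nullSupports s hxy hr) hsub).symm⟩
  · rintro ⟨x, y, hxy, hr, rfl⟩
    refine ⟨pair_mem_nullSupports s hxy hr, fun Y hY hYsub => ?_⟩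
    obtain ⟨a, b, hab, -, habY⟩ := exists_pair_subset_of_mem_nullSupports s hY
    refine Set.eq_of_subset_of_ncard_le hYsub ?_ (Set.toFinite _)
    calc ({x, y} : Set α).ncard = ({a, b} : Set α).ncard := by
          rw [Set.ncard_pair hxy, Set.ncard_pair hab]
      _ ≤ Y.ncard := Set.ncard_le_ncard habY (Set.toFinite _)

theorem pair_mem_minNullSupports_iff {α : Type*} [Fintype α] {s : Setoid α} {x y : α}
    (hxy : x ≠ y) : {x, y} ∈ minNullSupports s ↔ s.r x y := by
  refine ⟨fun h => ?_, fun hr => mem_minNullSupports_iff.2 ⟨x, y, hxy, hr, rfl⟩⟩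
  obtain ⟨a, b, -, hr, hpair⟩ := mem_minNullSupports_iff.1 h
  rcases Set.pair_eq_pair_iff.1 hpair with ⟨rfl, rfl⟩ | ⟨rfl, rfl⟩
  exacts [hr, s.symm hr]

/-- the map `f` sending an equivalence relation `R` on a finite set `U` to
the set of minimal nonempty supports of null-space vectors of `B(R)` over `GF(2)` is
injective and preserves intersections of equivalence relations. -/
theorem minNullSupports_injective_and_inter {α : Type*} [Fintype α] :
    (∀ s₁ s₂ : Setoid α, minNullSupports s₁ = minNullSupports s₂ → s₁ = s₂) ∧
      (∀ s₁ s₂ s₃ : Setoid α, (∀ x y : α, s₃.r x y ↔ s₁.r x y ∧ s₂.r x y) →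
        minNullSupports s₃ = minNullSupports s₁ ∩ minNullSupports s₂) := by
  refine ⟨fun s₁ s₂ h => ?_, fun s₁ s₂ s₃ h => ?_⟩
  · ext x y
    rcases eq_or_ne x y with rfl | hxy
    · exact iff_of_true (s₁.refl x) (s₂.refl x)
    · rw [← pair_mem_minNullSupports_iff hxy, h, pair_mem_minNullSupports_iff hxy]
  · ext S
    by_cases hS : ∃ x y, x ≠ y ∧ S = {x, y}
    · obtain ⟨x, y, hxy, rfl⟩ := hS
      simp only [Set.mem_inter_iff, pair_mem_minNullSupports_iff hxy, h]
    · have hnot (s : Setoid α) : S ∉ minNullSupports s := fun hmem =>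
        let ⟨x, y, hxy, _, hSxy⟩ := mem_minNullSupports_iff.1 hmem
        hS ⟨x, y, hxy, hSxy⟩
      simp only [Set.mem_inter_iff, hnot, and_self]
end
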